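/- Let (X, ρ) be a metric space, λ ∈ Δ∞, and let x = (x_k)_{k∈ℕ}, y = (y_k)_{k∈ℕ} be sequences in X such that the set {k ∈ ℕ : x_k ≠ y_k} has λ-density zero. Then Λ_x(λ) = Λ_y(λ) and Γ_x(λ) = Γ_y(λ), i.e., x and y have the same λ-statistical limit points and the same λ-statistical cluster points. (This is the paper's Theorem 4.3, specialized to the PM space induced by a metric, where F_{xy} = ε_{ρ(x,y)} and the strong topology is the metric topology.) -/

import Mathlib

open Filter Topology

/-- `l` belongs to the class `Δ∞`: a nondecreasing (for indices `≥ 1`) sequence of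
positive reals tending to `∞` with `l 1 = 1` and `l (n+1) ≤ l n + 1`. -/
def DeltaInfty (l : ℕ → ℝ) : Prop :=
  (∀ n, 1 ≤ n → 0 < l n) ∧ (∀ m n, 1 ≤ m → m ≤ n → l m ≤ l n) ∧
    Tendsto l atTop atTop ∧ l 1 = 1 ∧ ∀ n, 1 ≤ n → l (n + 1) ≤ l n + 1

open Classical in
/-- The number of elements of `M` in the window `I_n = [n - l n + 1, n] ∩ ℕ`. -/
noncomputable def lamCount (l : ℕ → ℝ) (M : Set ℕ) (n : ℕ) : ℕ :=
  ((Finset.Icc 1 n).filter (fun (k : ℕ) => ((n : ℝ) - l n + 1 ≤ (k : ℝ)) ∧ k ∈ M)).card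

/-- `M ⊆ ℕ` has `λ`-density `r`: `|{k ∈ I_n : k ∈ M}| / l n → r`. -/
def lamDensity (l : ℕ → ℝ) (M : Set ℕ) (r : ℝ) : Prop :=
  Tendsto (fun n => (lamCount l M n : ℝ) / l n) atTop (𝓝 r)

/-- `L` is a `λ`-statistical limit point of `x`: some subsequence of `x`, indexed (in
increasing order) by an infinite set that does not have `λ`-density zero, converges to `L`. -/
def LamStatLimitPt {X : Type*} [MetricSpace X] (l : ℕ → ℝ) (x : ℕ → X) (L : X) : Prop :=
  ∃ φ : ℕ → ℕ, StrictMono φ ∧ ¬ lamDensity l (Set.range φ) 0 ∧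
    Tendsto (x ∘ φ) atTop (𝓝 L)

/-- `Y` is a `λ`-statistical cluster point of `x`: for every `t > 0` the set
`{k : dist (x k) Y < t}` does not have `λ`-density zero. -/
def LamStatClusterPt {X : Type*} [MetricSpace X] (l : ℕ → ℝ) (x : ℕ → X) (Y : X) : Prop :=
  ∀ t > 0, ¬ lamDensity l {k | dist (x k) Y < t} 0

/-! Removing a set of `λ`-density zero from a set that does not have `λ`-density zero leaves a
set that does not have `λ`-density zero, and in particular an infinite one. Hence a subsequence of
`x` witnessing a limit point can be thinned to the indices where `x` and `y` agree, giving a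
witness for `y`; and each set `{k | dist (y k) Y < t}` contains `{k | dist (x k) Y < t}` up to
the density-zero set `{k | x k ≠ y k}`. -/

open Set

lemma lamCount_mono (l : ℕ → ℝ) {A B : Set ℕ} (h : A ⊆ B) (n : ℕ) :
    lamCount l A n ≤ lamCount l B n := by
  classical
  refine Finset.card_le_card fun k hk => ?_
  simp only [Finset.mem_filter] at hk ⊢
  exact ⟨hk.1, hk.2.1, h hk.2.2⟩

lemma lamCount_union_le (l : ℕ → ℝ) (A B : Set ℕ) (n : ℕ) :
    lamCount l (A ∪ B) n ≤ lamCount l A n + lamCount l B n := by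
  classical
  refine (Finset.card_le_card fun k hk => ?_).trans (Finset.card_union_le _ _)
  simp only [Finset.mem_filter, Finset.mem_union, Set.mem_union] at hk ⊢
  rcases hk with ⟨hkn, hkl, hkA | hkB⟩
  · exact Or.inl ⟨hkn, hkl, hkA⟩
  · exact Or.inr ⟨hkn, hkl, hkB⟩

section Density

variable {l : ℕ → ℝ}

lemma lamDensity_zero_mono (hl : ∀ᶠ n in atTop, 0 ≤ l n) {A B : Set ℕ} (h : A ⊆ B)
    (hB : lamDensity l B 0) : lamDensity l A 0 := by
  refine squeeze_zero' ?_ ?_ hB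
  · filter_upwards [hl] with n hn using div_nonneg (Nat.cast_nonneg _) hn
  · filter_upwards [hl] with n hn
    exact div_le_div_of_nonneg_right (by exact_mod_cast lamCount_mono l h n) hn

lemma lamDensity_zero_union (hl : ∀ᶠ n in atTop, 0 ≤ l n) {A B : Set ℕ}
    (hA : lamDensity l A 0) (hB : lamDensity l B 0) : lamDensity l (A ∪ B) 0 := by
  refine squeeze_zero' ?_ ?_ (by simpa using hA.add hB)
  · filter_upwards [hl] with n hn using div_nonneg (Nat.cast_nonneg _) hn
  · filter_upwards [hl] with n hn
    rw [← add_div]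
    exact div_le_div_of_nonneg_right (by exact_mod_cast lamCount_union_le l A B n) hn

lemma not_lamDensity_zero_diff (hl : ∀ᶠ n in atTop, 0 ≤ l n) {M D : Set ℕ}
    (hM : ¬ lamDensity l M 0) (hD : lamDensity l D 0) : ¬ lamDensity l (M \ D) 0 :=
  fun hMD => hM <| lamDensity_zero_mono hl (by simp) (lamDensity_zero_union hl hMD hD)

lemma lamDensity_zero_of_finite (hl : Tendsto l atTop atTop) {M : Set ℕ} (hM : M.Finite) :
    lamDensity l M 0 := by
  classical
  have hcount : ∀ n, lamCount l M n ≤ hM.toFinset.card := fun n =>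
    Finset.card_le_card fun k hk => by simpa using (Finset.mem_filter.mp hk).2.2
  refine squeeze_zero' ?_ ?_ ((tendsto_const_nhds (x := (hM.toFinset.card : ℝ))).div_atTop hl)
  · filter_upwards [hl.eventually_ge_atTop 0] with n hn using div_nonneg (Nat.cast_nonneg _) hn
  · filter_upwards [hl.eventually_ge_atTop 0] with n hn
    exact div_le_div_of_nonneg_right (by exact_mod_cast hcount n) hn

end Density

lemma Filter.Tendsto.comp_strictMono_of_range_subset {α : Type*} {f : Filter α} {x : ℕ → α}
    {φ ψ : ℕ → ℕ} (hφ : StrictMono φ) (hψ : StrictMono ψ) (h : range ψ ⊆ range φ)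
    (hx : Tendsto (x ∘ φ) atTop f) : Tendsto (x ∘ ψ) atTop f := by
  choose σ hσ using fun n => h ⟨n, rfl⟩
  have hσ_mono : StrictMono σ := fun m n hmn => hφ.lt_iff_lt.mp (by simpa only [hσ] using hψ hmn)
  have hxψ : x ∘ ψ = (x ∘ φ) ∘ σ := funext fun n => by simp [hσ]
  rw [hxψ]
  exact hx.comp hσ_mono.tendsto_atTop

section Transfer

variable {X : Type*} [MetricSpace X] {l : ℕ → ℝ} {x y : ℕ → X}

lemma LamStatLimitPt.of_lamDensity_zero_ne (hl : Tendsto l atTop atTop)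
    (hxy : lamDensity l {k | x k ≠ y k} 0) {L : X} (hL : LamStatLimitPt l x L) :
    LamStatLimitPt l y L := by
  obtain ⟨φ, hφ, hφ_dens, hφ_lim⟩ := hL
  set S := range φ \ {k | x k ≠ y k}
  have hS_dens : ¬ lamDensity l S 0 :=
    not_lamDensity_zero_diff (hl.eventually_ge_atTop 0) hφ_dens hxy
  have hS : S.Infinite := fun hfin => hS_dens (lamDensity_zero_of_finite hl hfin)
  have hS_range : range (Nat.nth (· ∈ S)) = S := Nat.range_nth_of_infinite hS
  have hyx : y ∘ Nat.nth (· ∈ S) = x ∘ Nat.nth (· ∈ S) :=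
    funext fun n => (not_not.mp (Nat.nth_mem_of_infinite hS n).2).symm
  refine ⟨Nat.nth (· ∈ S), Nat.nth_strictMono hS, by rwa [hS_range], hyx ▸ ?_⟩
  exact hφ_lim.comp_strictMono_of_range_subset hφ (Nat.nth_strictMono hS)
    (hS_range.subset.trans sdiff_subset)

lemma LamStatClusterPt.of_lamDensity_zero_ne (hl : ∀ᶠ n in atTop, 0 ≤ l n)
    (hxy : lamDensity l {k | x k ≠ y k} 0) {Y : X} (hY : LamStatClusterPt l x Y) :
    LamStatClusterPt l y Y := by
  intro t ht hyt
  refine not_lamDensity_zero_diff hl (hY t ht) hxy (lamDensity_zero_mono hl ?_ hyt)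
  rintro k ⟨hxk, hk⟩
  simpa [not_not.mp hk] using hxk

end Transfer

theorem lamStat_limitPts_clusterPts_eq_of_density_zero_diff {X : Type*} [MetricSpace X]
    (l : ℕ → ℝ) (hl : DeltaInfty l) (x y : ℕ → X)
    (hxy : lamDensity l {k | x k ≠ y k} 0) :
    {L | LamStatLimitPt l x L} = {L | LamStatLimitPt l y L} ∧
      {Y | LamStatClusterPt l x Y} = {Y | LamStatClusterPt l y Y} := by
  have hl_top : Tendsto l atTop atTop := hl.2.2.1
  have hl_nonneg : ∀ᶠ n in atTop, 0 ≤ l n := hl_top.eventually_ge_atTop 0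
  have hyx : lamDensity l {k | y k ≠ x k} 0 := by simpa only [ne_comm] using hxy
  refine ⟨Set.ext fun L => ⟨?_, ?_⟩, Set.ext fun Y => ⟨?_, ?_⟩⟩
  · exact LamStatLimitPt.of_lamDensity_zero_ne hl_top hxy
  · exact LamStatLimitPt.of_lamDensity_zero_ne hl_top hyx
  · exact LamStatClusterPt.of_lamDensity_zero_ne hl_nonneg hxy
  · exact LamStatClusterPt.of_lamDensity_zero_ne hl_nonneg hyx
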